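/- arXiv:0908.0711 — 5 statements merged into one kernel-verified Lean document; each statement's English description precedes it below -/
import Mathlib

section
/- Let F be a field, C a natural number, and z ≥ 1. Let v_1, ..., v_{2z} be nonzero vectors in F^C which, as an indexed family of 2z vectors, are linearly dependent. Then the index set {1, ..., 2z} can be partitioned into two disjoint sets Z₁ and Z₂ with |Z₁| = |Z₂| = z such that the subspaces span{v_i : i ∈ Z₁} and span{v_i : i ∈ Z₂} intersect non-trivially, i.e., their intersection contains a nonzero vector. -/
/-- If `v₁, ..., v_{2z}` are nonzero vectors in `F^C` forming a
linearly dependent family, then the index set can be partitioned into two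
disjoint sets `Z₁, Z₂` of size `z` each whose spans intersect non-trivially. -/
theorem stmt3 {F : Type*} [Field F] {C z : ℕ} (hz : 1 ≤ z)
    (v : Fin (2 * z) → (Fin C → F)) (hne : ∀ i, v i ≠ 0)
    (hdep : ¬ LinearIndependent F v) :
    ∃ Z₁ Z₂ : Finset (Fin (2 * z)), Disjoint Z₁ Z₂ ∧ Z₁ ∪ Z₂ = Finset.univ ∧
      Z₁.card = z ∧ Z₂.card = z ∧
      ∃ w : Fin C → F, w ≠ 0 ∧
        w ∈ Submodule.span F (v '' ↑Z₁) ⊓ Submodule.span F (v '' ↑Z₂) := by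
  classical
  -- Q n : there is a nontrivial relation with support of size n
  set Q : ℕ → Prop := fun n => ∃ g : Fin (2*z) → F,
      (∑ i, g i • v i = 0) ∧ g ≠ 0 ∧ (Finset.univ.filter (fun i => g i ≠ 0)).card = n with hQ
  have hQex : ∃ n, Q n := by
    rw [Fintype.not_linearIndependent_iff] at hdep
    obtain ⟨g, hg0, i, hgi⟩ := hdep
    exact ⟨_, g, hg0, fun h => hgi (by simp [h]), rfl⟩
  obtain ⟨g, hsum, hg0, hcard⟩ := Nat.find_spec hQex
  have hmin : ∀ g' : Fin (2*z) → F, (∑ i, g' i • v i = 0) → g' ≠ 0 →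
      Nat.find hQex ≤ (Finset.univ.filter (fun i => g' i ≠ 0)).card :=
    fun g' h1 h2 => Nat.find_le ⟨g', h1, h2, rfl⟩
  set S := Finset.univ.filter (fun i => g i ≠ 0) with hS
  obtain ⟨i₀, hi₀⟩ : ∃ i, g i ≠ 0 := by
    by_contra h; push_neg at h; exact hg0 (funext fun i => h i)
  have hi₀S : i₀ ∈ S := by simp [hS, hi₀]
  -- S has at least two elements
  obtain ⟨j₀, hj₀S, hj₀⟩ : ∃ j ∈ S, j ≠ i₀ := by
    by_contra h; push_neg at h
    have hSsub : S = {i₀} := by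
      apply Finset.eq_singleton_iff_unique_mem.mpr
      exact ⟨hi₀S, fun j hj => h j hj⟩
    have : ∑ i, g i • v i = g i₀ • v i₀ := by
      apply Finset.sum_eq_single_of_mem i₀ (Finset.mem_univ i₀)
      intro j _ hj
      have : g j = 0 := by
        by_contra hgj
        exact hj (h j (by simp [hS, hgj]))
      rw [this, zero_smul]
    rw [hsum] at this
    exact hne i₀ (by simpa [hi₀] using (smul_eq_zero.mp this.symm).resolve_left hi₀)
  -- build Z₁ of size z containing i₀, avoiding j₀
  have hcards : ({i₀} : Finset (Fin (2*z))).card ≤ z := by simpa using hz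
  have hzle : z ≤ (Finset.univ \ {j₀} : Finset (Fin (2*z))).card := by
    rw [Finset.card_sdiff_of_subset (by simp)]
    simp only [Finset.card_univ, Fintype.card_fin, Finset.card_singleton]
    omega
  obtain ⟨Z₁, hZ₁i, hZ₁sub, hZ₁card⟩ :=
    Finset.exists_subsuperset_card_eq (t := Finset.univ \ {j₀})
      (by simp [hj₀.symm ∘ Finset.mem_singleton.mp, Finset.subset_iff]; exact fun h => hj₀ h.symm)
      hcards hzle
  have hi₀Z₁ : i₀ ∈ Z₁ := hZ₁i (Finset.mem_singleton_self i₀)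
  have hj₀Z₁ : j₀ ∉ Z₁ := fun h => by simpa using hZ₁sub h
  refine ⟨Z₁, Z₁ᶜ, disjoint_compl_right, by simp, hZ₁card, ?_, ?_⟩
  · rw [Finset.card_compl, hZ₁card]; simp; omega
  · refine ⟨∑ i ∈ Z₁, g i • v i, ?_, ?_, ?_⟩
    · -- nonzero, by minimality
      intro hw
      set g' : Fin (2*z) → F := fun i => if i ∈ Z₁ then g i else 0 with hg'
      have hsum' : ∑ i, g' i • v i = 0 := by
        rw [← hw]
        simp only [hg', ite_smul, zero_smul]
        rw [Finset.sum_ite_mem, Finset.univ_inter]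
      have hne' : g' ≠ 0 := fun h => hi₀ (by simpa [hg', hi₀Z₁] using congrFun h i₀)
      have hlt : (Finset.univ.filter (fun i => g' i ≠ 0)).card < Nat.find hQex := by
        rw [← hcard]
        apply Finset.card_lt_card
        constructor
        · intro i hi
          rw [Finset.mem_filter] at hi ⊢
          refine ⟨hi.1, ?_⟩
          intro h
          apply hi.2
          by_cases hiZ : i ∈ Z₁ <;> simp [hg', hiZ, h]
        · intro hsub
          have : j₀ ∈ Finset.univ.filter (fun i => g' i ≠ 0) := hsub (by simpa [hS] using hj₀S)
          simp [hg', hj₀Z₁] at this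
      exact absurd (hmin g' hsum' hne') (not_le.mpr hlt)
    · apply Submodule.sum_smul_mem
      intro i hi
      exact Submodule.subset_span ⟨i, by simpa using hi, rfl⟩
    · have : ∑ i ∈ Z₁, g i • v i = ∑ i ∈ Z₁ᶜ, (-g i) • v i := by
        have := hsum
        rw [← Finset.sum_add_sum_compl Z₁] at this
        have h2 : ∑ i ∈ Z₁ᶜ, (-g i) • v i = -∑ i ∈ Z₁ᶜ, g i • v i := by
          simp [Finset.sum_neg_distrib, neg_smul]
        rw [h2]
        linear_combination (norm := module) this
      rw [this]
      apply Submodule.sum_smul_mem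
      intro i hi
      exact Submodule.subset_span ⟨i, by simpa using hi, rfl⟩
end

section
/- Let F be a field, ι an index set, z a natural number, and v : ι → F^C a family of vectors such that every subfamily indexed by a finite set of at most 2z indices is linearly independent. Let S ⊆ ι be a finite set with |S| ≤ z and let w ∈ span{v_e : e ∈ S}. If T ⊆ ι is a finite set of minimum cardinality among all finite sets T' ⊆ ι satisfying w ∈ span{v_e : e ∈ T'}, then T ⊆ S. -/
/-! Minimality gives `|T| ≤ |S| ≤ z`, so the vectors indexed by `S ∪ T` are independent.
For an independent family the spans over `S` and `T` meet exactly in the span over `S ∩ T`;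
hence `w` already lies in the span over `T ∩ S`, and minimality forces `T ∩ S = T`. -/

open Submodule Set

theorem LinearIndepOn.span_image_inter {R M ι : Type*} [Ring R] [AddCommGroup M] [Module R M]
    {v : ι → M} {s t : Set ι} (hv : LinearIndepOn R v (s ∪ t)) :
    span R (v '' (s ∩ t)) = span R (v '' s) ⊓ span R (v '' t) := by
  refine le_antisymm (le_inf (span_mono (image_mono inter_subset_left))
    (span_mono (image_mono inter_subset_right))) fun w ⟨hws, hwt⟩ ↦ ?_
  have hdisj : Disjoint (span R (v '' s)) (span R (v '' (t \ s))) :=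
    ((linearIndepOn_union_iff disjoint_sdiff_right).mp
      (hv.mono (union_subset_union_right s sdiff_subset))).2.2
  rw [← inter_union_sdiff t s, image_union, span_union, inter_comm] at hwt
  obtain ⟨a, ha, b, hb, rfl⟩ := mem_sup.mp hwt
  -- `b = w - a` lies in both disjoint spans, hence vanishes
  have hbs : b ∈ span R (v '' s) := by
    simpa using sub_mem hws (span_mono (image_mono inter_subset_left) ha)
  rwa [disjoint_def.mp hdisj b hbs hb, add_zero]

/-- If every subfamily of at most `2z` of the vectors `v_e` is
linearly independent, `S` is finite with `|S| ≤ z`, `w ∈ span {v_e : e ∈ S}`,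
and `T` has minimum cardinality among all finite sets `T'` with
`w ∈ span {v_e : e ∈ T'}`, then `T ⊆ S`. -/
theorem stmt5 {F ι : Type*} [Field F] {C z : ℕ}
    (v : ι → (Fin C → F))
    (hind : ∀ s : Finset ι, s.card ≤ 2 * z →
      LinearIndependent F (fun i : s => v i.1))
    (S : Finset ι) (hS : S.card ≤ z)
    (w : Fin C → F) (hw : w ∈ Submodule.span F (v '' ↑S))
    (T : Finset ι) (hT : w ∈ Submodule.span F (v '' ↑T))
    (hmin : ∀ T' : Finset ι, w ∈ Submodule.span F (v '' ↑T') → T.card ≤ T'.card) :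
    T ⊆ S := by
  classical
  have hTz : T.card ≤ z := (hmin S hw).trans hS
  have hindep : LinearIndepOn F v (↑T ∪ ↑S) := by
    rw [← Finset.coe_union]
    exact hind _ ((Finset.card_union_le T S).trans (by omega))
  have hwTS : w ∈ span F (v '' ↑(T ∩ S)) := by
    rw [Finset.coe_inter, hindep.span_image_inter]
    exact ⟨hT, hw⟩
  exact Finset.inter_eq_left.mp
    (Finset.eq_of_subset_of_card_le Finset.inter_subset_left (hmin _ hwTS))
end

section
/- Let F be a field, ι an index set, z a natural number, and v : ι → F^C a family of vectors such that every subfamily indexed by a finite set of at most 2z indices is linearly independent. Let S ⊆ ι be a finite set with |S| ≤ z, and for each e ∈ S let z_e ∈ F^n be a nonzero row vector. Let Y be the C×n matrix Y = Σ_{e∈S} v_e · z_e (sum of outer products of the column vector v_e with the row vector z_e). Let y_1, ..., y_η be columns of Y forming a basis of the column space of Y, and for each i ∈ {1,...,η} let T_i ⊆ ι be a finite set of minimum cardinality among all finite sets T' with y_i ∈ span{v_e : e ∈ T'}. Then ⋃_{i=1}^η T_i = S. -/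
/-!
Column `c` of `Y` is `∑_{e ∈ S} z_e(c) • v_e`. Since any `2z` of the `v_e` are independent, a
vector with a representation supported on at most `z` of the `v_e` has no other representation
on at most `z` of them, so a minimum-size `T_i` is exactly the support of the coefficients of
`y_i`. Independence of the `v_e` over `S` also makes the passage from coefficients to columns
injective, so the coefficient vector of any column is a combination of those of the `y_i`; as
each `z_e` is nonzero, every `e ∈ S` therefore shows up in some `T_i`.
-/

open Finsupp Submodule

section LinearCombination

variable {ι κ R M : Type*} [Semiring R] [AddCommMonoid M] [Module R M] {v : ι → M}

theorem Finsupp.support_subset_of_linearCombination_mem_span {l : ι →₀ R} {T : Set ι}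
    (hv : LinearIndepOn R v (↑l.support ∪ T))
    (hl : linearCombination R v l ∈ span R (v '' T)) : ↑l.support ⊆ T := by
  obtain ⟨l', hl'T, hl'⟩ := (mem_span_image_iff_linearCombination R).mp hl
  have hll' : l = l' := linearIndepOn_iffₛ.mp hv l ((mem_supported R l).mpr Set.subset_union_left)
    l' (supported_mono Set.subset_union_right hl'T) hl'.symm
  exact hll' ▸ hl'T

theorem Finsupp.eq_support_of_card_minimal {k : ℕ}
    (hv : ∀ s : Finset ι, s.card ≤ 2 * k → LinearIndepOn R v ↑s)
    {l : ι →₀ R} (hl : l.support.card ≤ k) {T : Finset ι}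
    (hT : linearCombination R v l ∈ span R (v '' ↑T))
    (hmin : ∀ T' : Finset ι, linearCombination R v l ∈ span R (v '' ↑T') → T.card ≤ T'.card) :
    T = l.support := by
  classical
  have hcard : T.card ≤ l.support.card := hmin _ <|
    (mem_span_image_iff_linearCombination R).mpr ⟨l, (mem_supported R l).mpr subset_rfl, rfl⟩
  have hsub : l.support ⊆ T := by
    refine Finset.coe_subset.mp (support_subset_of_linearCombination_mem_span ?_ hT)
    rw [← Finset.coe_union]
    exact hv _ ((Finset.card_union_le _ _).trans (by omega))
  exact (Finset.eq_of_subset_of_card_le hsub hcard).symm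

theorem Finsupp.mem_span_of_linearCombination_mem_span {S : Set ι} (hS : LinearIndepOn R v S)
    {b : κ → ι →₀ R} (hb : ∀ i, b i ∈ supported R R S) {l : ι →₀ R} (hl : l ∈ supported R R S)
    (h : linearCombination R v l ∈ span R (Set.range fun i => linearCombination R v (b i))) :
    l ∈ span R (Set.range b) := by
  rw [Set.range_comp', span_image, mem_map] at h
  obtain ⟨m, hm, hml⟩ := h
  have hmS : m ∈ supported R R S := span_le.mpr (Set.range_subset_iff.mpr hb) hm
  exact linearIndepOn_iffₛ.mp hS m hmS l hl hml ▸ hm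

theorem Finsupp.exists_apply_ne_zero_of_mem_span {b : κ → ι →₀ R} {l : ι →₀ R} {e : ι}
    (hl : l ∈ span R (Set.range b)) (he : l e ≠ 0) : ∃ i, b i e ≠ 0 := by
  by_contra! h
  have hker : span R (Set.range b) ≤ LinearMap.ker (lapply e) :=
    span_le.mpr (by rintro _ ⟨i, rfl⟩; exact h i)
  exact he (hker hl)

end LinearCombination

section ColumnCoeffs

variable {ι κ m R : Type*} [CommSemiring R]

noncomputable def columnCoeffs (S : Finset ι) (w : ι → κ → R) (c : κ) : ι →₀ R :=
  ∑ e ∈ S, single e (w e c)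

variable (S : Finset ι) (w : ι → κ → R) (c : κ)

theorem columnCoeffs_apply_of_mem {e : ι} (he : e ∈ S) : columnCoeffs S w c e = w e c := by
  classical
  simp [columnCoeffs, finsetSum_apply, single_apply, he]

theorem support_columnCoeffs_subset : (columnCoeffs S w c).support ⊆ S := by
  classical
  exact support_finsetSum.trans <| Finset.biUnion_subset.mpr fun e he =>
    support_single_subset.trans (Finset.singleton_subset_iff.mpr he)

theorem linearCombination_columnCoeffs (v : ι → m → R) :
    linearCombination R v (columnCoeffs S w c) =
      fun r => (∑ e ∈ S, Matrix.of fun i j => v e i * w e j) r c := by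
  funext r
  simp [columnCoeffs, map_sum, Matrix.sum_apply, Finset.sum_apply, mul_comm]

end ColumnCoeffs

theorem stmt6_general {F ι : Type*} [Field F] [DecidableEq ι] {C n z η : ℕ}
    (v : ι → (Fin C → F))
    (hind : ∀ s : Finset ι, s.card ≤ 2 * z →
      LinearIndependent F (fun i : s => v i.1))
    (S : Finset ι) (hS : S.card ≤ z)
    (zvec : ι → (Fin n → F)) (hzvec : ∀ e ∈ S, zvec e ≠ 0)
    (Y : Matrix (Fin C) (Fin n) F)
    (hY : Y = ∑ e ∈ S, Matrix.of (fun i j => v e i * zvec e j))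
    (y : Fin η → Fin n)
    (hbasis_span :
      Submodule.span F (Set.range (fun i : Fin η => fun r => Y r (y i))) =
        Submodule.span F (Set.range (fun c : Fin n => fun r => Y r c)))
    (T : Fin η → Finset ι)
    (hTmem : ∀ i, (fun r => Y r (y i)) ∈ Submodule.span F (v '' ↑(T i)))
    (hTmin : ∀ i (T' : Finset ι),
      (fun r => Y r (y i)) ∈ Submodule.span F (v '' ↑T') → (T i).card ≤ T'.card) :
    Finset.univ.biUnion T = S := by
  set a := columnCoeffs S zvec
  have hcol : ∀ c, linearCombination F v (a c) = fun r => Y r c := fun c =>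
    hY ▸ linearCombination_columnCoeffs S zvec c v
  have ha : ∀ c, a c ∈ supported F F ↑S := fun c =>
    (mem_supported F _).mpr (Finset.coe_subset.mpr (support_columnCoeffs_subset S zvec c))
  have hT : ∀ i, T i = (a (y i)).support := fun i =>
    eq_support_of_card_minimal hind
      ((Finset.card_le_card (support_columnCoeffs_subset S zvec (y i))).trans hS)
      (hcol _ ▸ hTmem i) (fun T' => hcol _ ▸ hTmin i T')
  ext e
  simp only [Finset.mem_biUnion, Finset.mem_univ, true_and, hT, mem_support_iff]
  constructor
  · rintro ⟨i, hi⟩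
    exact support_columnCoeffs_subset S zvec (y i) (mem_support_iff.mpr hi)
  · intro he
    obtain ⟨c, hc⟩ := Function.ne_iff.mp (hzvec e he)
    have hspan : a c ∈ span F (Set.range fun i => a (y i)) := by
      refine mem_span_of_linearCombination_mem_span (hind S (by omega)) (fun i => ha _) (ha c) ?_
      simp only [hcol, hbasis_span]
      exact subset_span ⟨c, rfl⟩
    exact exists_apply_ne_zero_of_mem_span hspan (columnCoeffs_apply_of_mem S zvec c he ▸ hc)

/-- correctness of LOCATE-ADVERSARY-RLNC. If every ≤ 2z of the
IRVs `v_e` are linearly independent, `Y = ∑_{e∈S} v_e · z_e` with `|S| ≤ z` and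
all `z_e ≠ 0`, the columns `y_1,...,y_η` of `Y` form a basis of the column
space of `Y`, and each `T_i` is a minimum-cardinality set with
`y_i ∈ span {v_e : e ∈ T_i}`, then `⋃ T_i = S`. -/
theorem stmt6 {F ι : Type*} [Field F] [DecidableEq ι] {C n z η : ℕ}
    (v : ι → (Fin C → F))
    (hind : ∀ s : Finset ι, s.card ≤ 2 * z →
      LinearIndependent F (fun i : s => v i.1))
    (S : Finset ι) (hS : S.card ≤ z)
    (zvec : ι → (Fin n → F)) (hzvec : ∀ e ∈ S, zvec e ≠ 0)
    (Y : Matrix (Fin C) (Fin n) F)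
    (hY : Y = ∑ e ∈ S, Matrix.of (fun i j => v e i * zvec e j))
    (y : Fin η → Fin n)
    (hbasis_indep : LinearIndependent F (fun i : Fin η => fun r => Y r (y i)))
    (hbasis_span :
      Submodule.span F (Set.range (fun i : Fin η => fun r => Y r (y i))) =
        Submodule.span F (Set.range (fun c : Fin n => fun r => Y r c)))
    (T : Fin η → Finset ι)
    (hTmem : ∀ i, (fun r => Y r (y i)) ∈ Submodule.span F (v '' ↑(T i)))
    (hTmin : ∀ i (T' : Finset ι),
      (fun r => Y r (y i)) ∈ Submodule.span F (v '' ↑T') → (T i).card ≤ T'.card) :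
    Finset.univ.biUnion T = S :=
  stmt6_general v hind S hS zvec hzvec Y hY y hbasis_span T hTmem hTmin
end

section
/- Let F be a field, ι a finite index set, a : ι → F an injective function with a_e ≠ 0 for all e ∈ ι, and d, z natural numbers with 2z ≤ d. Let H be the matrix with d rows whose column indexed by e ∈ ι is the power vector p_d(a_e) = (a_e, a_e², ..., a_e^d). If b, b' : ι → F each have at most z nonzero entries and H·b = H·b' (i.e., Σ_e b_e p_d(a_e) = Σ_e b'_e p_d(a_e)), then b = b'. -/
open scoped Classical in
/-- uniqueness of sparse Reed–Solomon representations. With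
`a : ι → F` injective and nonzero, `2z ≤ d`, if `b, b'` each have at most `z`
nonzero entries and `∑ e, b e • p_d(a e) = ∑ e, b' e • p_d(a e)` (where
`p_d(x) = (x, x², ..., x^d)`), then `b = b'`. -/
theorem stmt11 {F ι : Type*} [Field F] [Fintype ι] {d z : ℕ}
    (hdz : 2 * z ≤ d)
    (a : ι → F) (hinj : Function.Injective a) (ha0 : ∀ e, a e ≠ 0)
    (b b' : ι → F)
    (hb : (Finset.univ.filter (fun e => b e ≠ 0)).card ≤ z)
    (hb' : (Finset.univ.filter (fun e => b' e ≠ 0)).card ≤ z)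
    (h : ∀ j : Fin d,
      ∑ e, b e * (a e) ^ ((j : ℕ) + 1) = ∑ e, b' e * (a e) ^ ((j : ℕ) + 1)) :
    b = b' := by
  classical
  set c : ι → F := fun e => b e - b' e with hcdef
  have hc : ∀ j : Fin d, ∑ e, c e * a e ^ ((j : ℕ) + 1) = 0 := by
    intro j
    have := h j
    simp only [hcdef, sub_mul, Finset.sum_sub_distrib]
    rw [this]; ring
  suffices hc0 : ∀ e, c e = 0 by
    funext e
    have := hc0 e
    simpa [hcdef, sub_eq_zero] using this
  set s : Finset ι := Finset.univ.filter (fun e => c e ≠ 0) with hsdef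
  have hsub : s ⊆ (Finset.univ.filter (fun e => b e ≠ 0)) ∪
      (Finset.univ.filter (fun e => b' e ≠ 0)) := by
    intro e he
    simp only [hsdef, Finset.mem_filter, Finset.mem_univ, true_and] at he
    simp only [Finset.mem_union, Finset.mem_filter, Finset.mem_univ, true_and]
    by_contra hcon
    push_neg at hcon
    exact he (by simp [hcdef, hcon.1, hcon.2])
  have hcard : s.card ≤ d := by
    calc s.card ≤ _ := Finset.card_le_card hsub
    _ ≤ _ := Finset.card_union_le _ _
    _ ≤ z + z := add_le_add hb hb'
    _ ≤ d := by omega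
  set n := s.card with hndef
  let g : Fin n → s := s.equivFin.symm
  let v : Fin n → F := fun i => a (g i)
  have hv : Function.Injective v := by
    intro i j hij
    have := hinj hij
    have : g i = g j := Subtype.ext this
    exact s.equivFin.symm.injective this
  let M : Matrix (Fin n) (Fin n) F := Matrix.of fun i j => v j ^ ((i : ℕ) + 1)
  have hMeq : M = (Matrix.vandermonde v).transpose * Matrix.diagonal v := by
    ext i j
    simp [M, Matrix.mul_apply, Matrix.diagonal, Matrix.vandermonde, pow_succ]
  have hdet : M.det ≠ 0 := by
    rw [hMeq, Matrix.det_mul, Matrix.det_transpose, Matrix.det_diagonal]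
    apply mul_ne_zero
    · rw [Matrix.det_vandermonde_ne_zero_iff]
      exact hv
    · exact Finset.prod_ne_zero_iff.mpr fun i _ => ha0 _
  have hx : M.mulVec (fun j => c (g j)) = 0 := by
    funext i
    have hid : (i : ℕ) < d := lt_of_lt_of_le i.2 hcard
    have hz := hc ⟨i, hid⟩
    have hrestrict : ∑ e ∈ s, c e * a e ^ ((i : ℕ) + 1) = 0 := by
      rw [← hz]
      exact Finset.sum_subset (Finset.subset_univ s) (by
        intro e _ he
        simp only [hsdef, Finset.mem_filter, Finset.mem_univ, true_and, not_not] at he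
        simp [he])
    have hsum : ∑ j : Fin n, c (g j) * v j ^ ((i : ℕ) + 1)
        = ∑ e ∈ s, c e * a e ^ ((i : ℕ) + 1) := by
      rw [← Finset.sum_attach s (fun e => c e * a e ^ ((i : ℕ) + 1))]
      exact Fintype.sum_equiv s.equivFin.symm _ _ (fun j => rfl)
    simp only [Matrix.mulVec, dotProduct, Pi.zero_apply]
    calc ∑ j, M i j * c (g j) = ∑ j : Fin n, c (g j) * v j ^ ((i : ℕ) + 1) := by
          apply Finset.sum_congr rfl; intro j _; simp [M]; ring
    _ = 0 := by rw [hsum, hrestrict]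
  have hzero : (fun j => c (g j)) = 0 := Matrix.eq_zero_of_mulVec_eq_zero hdet hx
  intro e
  by_contra hce
  have hes : e ∈ s := by simp [hsdef, hce]
  have := congrFun hzero (s.equivFin ⟨e, hes⟩)
  simp only [g, Equiv.symm_apply_apply] at this
  exact hce this
end

section
/- Let F be a field, ι a finite index set, a : ι → F an injective function with a_e ≠ 0 for all e ∈ ι, and d, z, n natural numbers with 2z ≤ d. Let S ⊆ ι with |S| ≤ z, and for each e ∈ S let z_e ∈ F^n be a nonzero row vector. Let L be the d×n matrix L = Σ_{e∈S} p_d(a_e) · z_e (sum of outer products of the power vectors p_d(a_e) = (a_e, a_e², ..., a_e^d) with the rows z_e). Then for every column index l ∈ {1,...,n} there exists a unique function b^{(l)} : ι → F with at most z nonzero entries such that Σ_{e∈ι} b^{(l)}_e p_d(a_e) equals the l-th column of L; moreover, the union over l of the supports of the b^{(l)} equals S. -/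
open Finset
open scoped Classical

private lemma key_zero {F ι : Type*} [Field F] [Fintype ι] {d : ℕ}
    (a : ι → F) (hinj : Function.Injective a) (ha0 : ∀ e, a e ≠ 0)
    (f : ι → F) (hcard : (Finset.univ.filter (fun e => f e ≠ 0)).card ≤ d)
    (h : ∀ j : Fin d, ∑ e, f e * (a e) ^ ((j : ℕ) + 1) = 0) : f = 0 := by
  classical
  set T := Finset.univ.filter (fun e => f e ≠ 0) with hT
  set m := T.card with hm
  have hmd : m ≤ d := hcard
  set eqv : Fin m ≃ T := T.equivFin.symm with heqv
  set v : Fin m → F := fun i => a ((eqv i : ι)) with hv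
  have hvinj : Function.Injective v := fun i j hij =>
    eqv.injective (Subtype.ext (hinj hij))
  set M : Matrix (Fin m) (Fin m) F := Matrix.of fun i j => v i ^ ((j : ℕ) + 1) with hM
  have hdet : IsUnit M.det := by
    have hMeq : M = Matrix.diagonal v * Matrix.vandermonde v := by
      ext i j
      simp [hM, Matrix.diagonal_mul, Matrix.vandermonde, pow_succ, mul_comm]
    rw [hMeq, Matrix.det_mul, Matrix.det_diagonal, Matrix.det_vandermonde]
    refine IsUnit.mul (isUnit_iff_ne_zero.mpr ?_) (isUnit_iff_ne_zero.mpr ?_)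
    · exact Finset.prod_ne_zero_iff.mpr fun i _ => ha0 _
    · refine Finset.prod_ne_zero_iff.mpr fun i _ => Finset.prod_ne_zero_iff.mpr fun j hj => ?_
      refine sub_ne_zero.mpr fun hvv => ?_
      have := hvinj hvv
      simp only [Finset.mem_Ioi] at hj
      exact absurd this (ne_of_gt hj)
  set t : Fin m → F := fun i => f ((eqv i : ι)) with ht
  have hvm : Matrix.vecMul t M = 0 := by
    funext j
    have hjd : (j : ℕ) < d := lt_of_lt_of_le j.2 hmd
    have h1 : ∑ e ∈ T, f e * (a e) ^ ((j : ℕ) + 1) = 0 := by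
      rw [Finset.sum_subset (Finset.subset_univ T)
        (fun x _ hx => by
          simp only [hT, Finset.mem_filter, Finset.mem_univ, true_and, not_not] at hx
          simp [hx])]
      exact h ⟨j, hjd⟩
    have h2 : ∑ i : Fin m, t i * v i ^ ((j : ℕ) + 1) = 0 := by
      rw [← h1, ← Finset.sum_coe_sort T (fun e => f e * (a e) ^ ((j : ℕ) + 1))]
      exact Fintype.sum_equiv eqv _ _ (fun i => rfl)
    simpa [Matrix.vecMul, dotProduct, hM] using h2
  have ht0 : t = 0 := by
    have hMinv := Matrix.mul_nonsing_inv M hdet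
    calc t = Matrix.vecMul t (M * M⁻¹) := by rw [hMinv, Matrix.vecMul_one]
    _ = Matrix.vecMul (Matrix.vecMul t M) M⁻¹ := by rw [Matrix.vecMul_vecMul]
    _ = 0 := by rw [hvm, Matrix.zero_vecMul]
  funext e
  by_cases he : e ∈ T
  · have := congrFun ht0 (eqv.symm ⟨e, he⟩)
    simpa [ht] using this
  · simp only [hT, Finset.mem_filter, Finset.mem_univ, true_and, not_not] at he
    simpa using he

open scoped Classical in
/-- correctness of LOCATE-ADVERSARY-RS. With `a : ι → F`
injective and nonzero, `2z ≤ d`, `|S| ≤ z`, nonzero error packets `z_e` for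
`e ∈ S`, and the syndrome matrix `L = ∑_{e∈S} p_d(a e) · z_e` (outer products,
where `p_d(x) = (x, x², ..., x^d)`): for each column `l` there is a unique
`z`-sparse `b : ι → F` with `∑ e, b e • p_d(a e)` equal to the `l`-th column of
`L`, and the union over `l` of the supports of these `b` equals `S`. -/
theorem stmt12 {F ι : Type*} [Field F] [Fintype ι] {d z n : ℕ}
    (hdz : 2 * z ≤ d)
    (a : ι → F) (hinj : Function.Injective a) (ha0 : ∀ e, a e ≠ 0)
    (S : Finset ι) (hS : S.card ≤ z)
    (zvec : ι → (Fin n → F)) (hzvec : ∀ e ∈ S, zvec e ≠ 0)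
    (L : Matrix (Fin d) (Fin n) F)
    (hL : L = ∑ e ∈ S, Matrix.of (fun (j : Fin d) (l : Fin n) => (a e) ^ ((j : ℕ) + 1) * zvec e l)) :
    (∀ l : Fin n, ∃! b : ι → F,
      (Finset.univ.filter (fun e => b e ≠ 0)).card ≤ z ∧
        ∀ j : Fin d, ∑ e, b e * (a e) ^ ((j : ℕ) + 1) = L j l) ∧
    ∀ b : Fin n → ι → F,
      (∀ l : Fin n,
        (Finset.univ.filter (fun e => b l e ≠ 0)).card ≤ z ∧
          ∀ j : Fin d, ∑ e, b l e * (a e) ^ ((j : ℕ) + 1) = L j l) →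
      (⋃ l : Fin n, Function.support (b l)) = (S : Set ι) := by
  classical
  -- canonical solution
  set bc : Fin n → ι → F := fun l e => if e ∈ S then zvec e l else 0 with hbc
  have hbcP : ∀ l : Fin n,
      (Finset.univ.filter (fun e => bc l e ≠ 0)).card ≤ z ∧
        ∀ j : Fin d, ∑ e, bc l e * (a e) ^ ((j : ℕ) + 1) = L j l := by
    intro l
    constructor
    · refine le_trans (le_trans (Finset.card_le_card ?_) le_rfl) hS
      intro e he
      simp only [Finset.mem_filter, Finset.mem_univ, true_and, hbc] at he
      by_contra hne
      simp [hne] at he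
    · intro j
      have : ∑ e, bc l e * (a e) ^ ((j : ℕ) + 1)
          = ∑ e ∈ S, zvec e l * (a e) ^ ((j : ℕ) + 1) := by
        rw [← Finset.sum_subset (Finset.subset_univ S)
          (fun x _ hx => by simp [hbc, hx])]
        exact Finset.sum_congr rfl fun e he => by simp [hbc, he]
      rw [this, hL]
      simp [Matrix.sum_apply, mul_comm]
  -- uniqueness core
  have huniq : ∀ l : Fin n, ∀ b1 b2 : ι → F,
      ((Finset.univ.filter (fun e => b1 e ≠ 0)).card ≤ z ∧
        ∀ j : Fin d, ∑ e, b1 e * (a e) ^ ((j : ℕ) + 1) = L j l) →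
      ((Finset.univ.filter (fun e => b2 e ≠ 0)).card ≤ z ∧
        ∀ j : Fin d, ∑ e, b2 e * (a e) ^ ((j : ℕ) + 1) = L j l) →
      b1 = b2 := by
    intro l b1 b2 ⟨hc1, hs1⟩ ⟨hc2, hs2⟩
    have hsub : (Finset.univ.filter (fun e => (b1 - b2) e ≠ 0))
        ⊆ (Finset.univ.filter (fun e => b1 e ≠ 0)) ∪ (Finset.univ.filter (fun e => b2 e ≠ 0)) := by
      intro e he
      simp only [Finset.mem_filter, Finset.mem_union, Finset.mem_univ, true_and,
        Pi.sub_apply] at he ⊢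
      by_contra hc
      push_neg at hc
      simp [hc.1, hc.2] at he
    have hcard : (Finset.univ.filter (fun e => (b1 - b2) e ≠ 0)).card ≤ d := by
      calc _ ≤ _ := Finset.card_le_card hsub
      _ ≤ _ + _ := Finset.card_union_le _ _
      _ ≤ z + z := add_le_add hc1 hc2
      _ ≤ d := by omega
    have hz : ∀ j : Fin d, ∑ e, (b1 - b2) e * (a e) ^ ((j : ℕ) + 1) = 0 := by
      intro j
      simp only [Pi.sub_apply, sub_mul, Finset.sum_sub_distrib, hs1 j, hs2 j, sub_self]
    exact sub_eq_zero.mp (key_zero a hinj ha0 (b1 - b2) hcard hz)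
  refine ⟨fun l => ⟨bc l, hbcP l, fun b hb => huniq l b (bc l) hb (hbcP l)⟩, ?_⟩
  intro b hb
  have hbeq : ∀ l, b l = bc l := fun l => huniq l (b l) (bc l) (hb l) (hbcP l)
  ext e
  simp only [Set.mem_iUnion, Function.mem_support, Finset.coe_sort_coe, Finset.mem_coe]
  constructor
  · rintro ⟨l, hl⟩
    rw [hbeq l] at hl
    by_contra he
    simp [hbc, he] at hl
  · intro he
    obtain ⟨l, hl⟩ := Function.ne_iff.mp (hzvec e he)
    exact ⟨l, by rw [hbeq l]; simpa [hbc, he] using hl⟩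
end
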